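/- arXiv:1212.0022 — 3 statements merged into one kernel-verified Lean document; each statement's English description precedes it below -/
import Mathlib

section
/- Consider n user types with per-job resource requirements R_{ij} > 0 for resources i = 1,…,m, bundle contents b_i > 0, and demand functions x*_j : ℝ_{>0} → ℝ_{≥0} that depend only on the per-job cost. Suppose there is a resource k such that for every user j, R_{kj}/b_k = max_i R_{ij}/b_i. Let p^b > 0 be any bundle price feasible for the bundled constraint ∑_j max_i(R_{ij}/b_i) · x*_j((max_i R_{ij}/b_i)^γ p^b) ≤ min_i C_i/b_i. Then the resource-pricing vector with p_k = p^b / b_k^γ and p_i = 0 for i ≠ k yields the same per-job cost for every user, satisfies the resource constraints ∑_j R_{ij} x*_j ≤ C_i for all i, and gives the same value of any objective that is a function only of users' per-job costs and demands. Consequently the maximum objective under resource pricing is at least the maximum objective under bundled pricing. -/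
open Real Set

/-- If some resource `k` maximizes `R i j / b i` for every user, then any
feasible bundled price can be replicated by resource prices giving the same
per-job costs and demands, satisfying the resource constraints; hence the
maximum objective with bundling does not exceed that without bundling. -/
theorem stmt3 (n m : ℕ) (hm : 0 < m)
    (R : Fin m → Fin n → ℝ) (b C : Fin m → ℝ) (γ pb : ℝ)
    (xstar : Fin n → ℝ → ℝ)
    (hR : ∀ i j, 0 < R i j) (hb : ∀ i, 0 < b i) (hC : ∀ i, 0 < C i)
    (hx : ∀ j r, 0 ≤ xstar j r)
    (hγ0 : 0 < γ) (hγ1 : γ ≤ 1) (hpb : 0 < pb)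
    (k : Fin m) (hk : ∀ j i, R i j / b i ≤ R k j / b k)
    (hfeas : ∀ i, ∑ j, (R k j / b k) * xstar j ((R k j / b k) ^ γ * pb) ≤ C i / b i) :
    ∃ p : Fin m → ℝ, (∀ i, 0 ≤ p i) ∧
      (∀ j, ∑ i, p i * R i j ^ γ = (R k j / b k) ^ γ * pb) ∧
      (∀ i, ∑ j, R i j * xstar j (∑ i', p i' * R i' j ^ γ) ≤ C i) ∧
      ∀ f : (Fin n → ℝ) → (Fin n → ℝ) → ℝ,
        f (fun j => ∑ i, p i * R i j ^ γ)
          (fun j => xstar j (∑ i', p i' * R i' j ^ γ)) =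
        f (fun j => (R k j / b k) ^ γ * pb)
          (fun j => xstar j ((R k j / b k) ^ γ * pb)) := by
  set p : Fin m → ℝ := fun i => if i = k then pb / b k ^ γ else 0 with hp
  have hcost : ∀ j, ∑ i, p i * R i j ^ γ = (R k j / b k) ^ γ * pb := by
    intro j
    rw [Finset.sum_eq_single k (by intro i _ h; simp [hp, h]) (by simp)]
    simp only [hp, if_pos rfl]
    rw [Real.div_rpow (le_of_lt (hR k j)) (le_of_lt (hb k))]
    have hbk : (0:ℝ) < b k ^ γ := Real.rpow_pos_of_pos (hb k) γ
    field_simp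
  refine ⟨p, ?_, hcost, ?_, ?_⟩
  · intro i
    by_cases h : i = k <;> simp [hp, h]
    exact div_nonneg hpb.le (Real.rpow_pos_of_pos (hb k) γ).le
  · intro i
    have key : ∑ j, R i j * xstar j (∑ i', p i' * R i' j ^ γ)
        ≤ b i * ∑ j, (R k j / b k) * xstar j ((R k j / b k) ^ γ * pb) := by
      rw [Finset.mul_sum]
      apply Finset.sum_le_sum
      intro j _
      rw [hcost j]
      have h1 : R i j ≤ b i * (R k j / b k) := by
        have := hk j i
        rw [div_le_div_iff₀ (hb i) (hb k)] at this
        rw [mul_div_assoc', le_div_iff₀ (hb k)]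
        linarith
      have := mul_le_mul_of_nonneg_right h1 (hx j ((R k j / b k) ^ γ * pb))
      linarith [this]
    calc ∑ j, R i j * xstar j (∑ i', p i' * R i' j ^ γ)
        ≤ b i * ∑ j, (R k j / b k) * xstar j ((R k j / b k) ^ γ * pb) := key
      _ ≤ b i * (C i / b i) := by
          apply mul_le_mul_of_nonneg_left (hfeas i) (le_of_lt (hb i))
      _ = C i := mul_div_cancel₀ (C i) (hb i).ne'
  · intro f
    congr 1 <;> funext j <;> rw [hcost j]
end

section
/- Let each user j have per-job cost r_j = r_j(p), an affine function of a price vector p with positive coefficients, and demand x*_j(r_j) solving U_j'(x) = r_j γ x^{γ-1}. If for every user j the condition 0 < U_j''(x*_j) + γ r_j (x*_j)^{γ-2} < γ² r_j (x*_j)^{γ-2} holds, then the revenue ρ(p) = ∑_j r_j(p) · x*_j(r_j(p))^γ is strictly decreasing in each coordinate of p. -/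
/-!
Write `x = x*(r)`. The first-order condition says that `priceCurve U γ x = U'(x) x^{1-γ}`
equals `γ r` along the demand curve, and the revenue satisfies
`γ r x^γ = revenueCurve U x = U'(x) x`. On the demand curve the right-hand inequality of the
hypothesis says exactly that `priceCurve` has negative derivative, so demand strictly decreases
with the cost `r`, and the left-hand one that `revenueCurve` has positive derivative, so revenue
strictly decreases as well. Since every cost `r_j(p)` is strictly increasing in each
price, so is every user's contribution to the total revenue.
-/

open Real Set

/-- By the intermediate value theorem the image of `f` contains the segment `[f a, f b]`, on which
`g` is therefore strictly increasing. -/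
lemma lt_of_hasDerivAt_pos_on_image {f g : ℝ → ℝ} {a b : ℝ} (hf : ContinuousOn f (uIcc a b))
    (hg : ∀ x ∈ f '' uIcc a b, ∃ d, HasDerivAt g d x ∧ 0 < d) (hab : f a < f b) :
    g (f a) < g (f b) := by
  have hsub : Icc (f a) (f b) ⊆ f '' uIcc a b := by
    simpa only [uIcc_of_lt hab] using intermediate_value_uIcc hf
  have hmono : StrictMonoOn g (Icc (f a) (f b)) :=
    strictMonoOn_of_deriv_pos (convex_Icc _ _)
      (fun x hx => (hg x (hsub hx)).elim fun _ h => h.1.continuousAt.continuousWithinAt)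
      (fun x hx => by
        rw [interior_Icc] at hx
        obtain ⟨d, hd, hd_pos⟩ := hg x (hsub (Ioo_subset_Icc_self hx))
        rwa [hd.deriv])
  exact hmono (left_mem_Icc.mpr hab.le) (right_mem_Icc.mpr hab.le) hab

section Demand

noncomputable def priceCurve (U : ℝ → ℝ) (γ x : ℝ) : ℝ := deriv U x * x ^ (1 - γ)

noncomputable def revenueCurve (U : ℝ → ℝ) (x : ℝ) : ℝ := deriv U x * x

variable {U xs : ℝ → ℝ} {γ : ℝ}

lemma hasDerivAt_priceCurve {x : ℝ} (hU : DifferentiableAt ℝ (deriv U) x) (hx : 0 < x) :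
    HasDerivAt (priceCurve U γ)
      (deriv (deriv U) x * x ^ (1 - γ) + deriv U x * ((1 - γ) * x ^ (1 - γ - 1))) x :=
  hU.hasDerivAt.mul (hasDerivAt_rpow_const (Or.inl hx.ne'))

lemma hasDerivAt_revenueCurve {x : ℝ} (hU : DifferentiableAt ℝ (deriv U) x) :
    HasDerivAt (revenueCurve U) (deriv (deriv U) x * x + deriv U x * 1) x :=
  hU.hasDerivAt.mul (hasDerivAt_id x)

variable (hpos : ∀ r, 0 < r → 0 < xs r)
  (hfoc : ∀ r, 0 < r → deriv U (xs r) = r * γ * xs r ^ (γ - 1))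
include hpos hfoc

lemma priceCurve_demand {r : ℝ} (hr : 0 < r) : priceCurve U γ (xs r) = γ * r := by
  have hexp : γ - 1 + (1 - γ) = 0 := by ring
  rw [priceCurve, hfoc r hr, mul_assoc, ← rpow_add (hpos r hr), hexp, rpow_zero]
  ring

lemma revenueCurve_demand {r : ℝ} (hr : 0 < r) :
    revenueCurve U (xs r) = γ * (r * xs r ^ γ) := by
  rw [revenueCurve, hfoc r hr, mul_assoc, ← rpow_add_one (hpos r hr).ne', sub_add_cancel]
  ring

lemma exists_hasDerivAt_priceCurve_neg (hU : Differentiable ℝ (deriv U)) {r : ℝ} (hr : 0 < r)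
    (hcond : deriv (deriv U) (xs r) + γ * r * xs r ^ (γ - 2) < γ ^ 2 * r * xs r ^ (γ - 2)) :
    ∃ d, HasDerivAt (priceCurve U γ) d (xs r) ∧ d < 0 := by
  have hx := hpos r hr
  refine ⟨_, hasDerivAt_priceCurve (hU _) hx, ?_⟩
  have hpow : xs r ^ (γ - 1) * xs r ^ (1 - γ - 1) = xs r ^ (γ - 2) * xs r ^ (1 - γ) := by
    rw [← rpow_add hx, ← rpow_add hx]
    ring_nf
  rw [hfoc r hr]
  calc _ = xs r ^ (1 - γ) * (deriv (deriv U) (xs r) + γ * r * xs r ^ (γ - 2)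
        - γ ^ 2 * r * xs r ^ (γ - 2)) := by linear_combination (r * γ * (1 - γ)) * hpow
    _ < 0 := mul_neg_of_pos_of_neg (rpow_pos_of_pos hx _) (sub_neg.mpr hcond)

lemma exists_hasDerivAt_revenueCurve_pos (hU : Differentiable ℝ (deriv U)) {r : ℝ} (hr : 0 < r)
    (hcond : 0 < deriv (deriv U) (xs r) + γ * r * xs r ^ (γ - 2)) :
    ∃ d, HasDerivAt (revenueCurve U) d (xs r) ∧ 0 < d := by
  have hx := hpos r hr
  refine ⟨_, hasDerivAt_revenueCurve (hU _), ?_⟩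
  have hpow : xs r ^ (γ - 2) * xs r = xs r ^ (γ - 1) := by
    rw [← rpow_add_one hx.ne']
    ring_nf
  rw [hfoc r hr]
  calc 0 < xs r * (deriv (deriv U) (xs r) + γ * r * xs r ^ (γ - 2)) := mul_pos hx hcond
    _ = _ := by linear_combination (r * γ) * hpow

variable (hU : Differentiable ℝ (deriv U)) (hγ : 0 < γ) (hcont : ContinuousOn xs (Ioi 0))
include hU hγ hcont

lemma demand_strictAntiOn
    (hcond : ∀ r, 0 < r →
      deriv (deriv U) (xs r) + γ * r * xs r ^ (γ - 2) < γ ^ 2 * r * xs r ^ (γ - 2)) :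
    StrictAntiOn xs (Ioi 0) := by
  intro r₁ h₁ r₂ h₂ h₁₂
  by_contra! hle
  rcases hle.eq_or_lt with heq | hlt
  · have : γ * r₁ = γ * r₂ := by
      rw [← priceCurve_demand hpos hfoc h₁, ← priceCurve_demand hpos hfoc h₂, heq]
    exact h₁₂.ne (mul_left_cancel₀ hγ.ne' this)
  · have huIcc := (ordConnected_Ioi (a := (0 : ℝ))).uIcc_subset h₁ h₂
    have hprice := lt_of_hasDerivAt_pos_on_image (g := -priceCurve U γ) (hcont.mono huIcc)
      (by
        rintro _ ⟨r, hr, rfl⟩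
        obtain ⟨d, hd, hd_neg⟩ :=
          exists_hasDerivAt_priceCurve_neg hpos hfoc hU (huIcc hr) (hcond r (huIcc hr))
        exact ⟨-d, hd.neg, neg_pos.mpr hd_neg⟩)
      hlt
    rw [Pi.neg_apply, Pi.neg_apply, neg_lt_neg_iff, priceCurve_demand hpos hfoc h₁,
      priceCurve_demand hpos hfoc h₂] at hprice
    exact h₁₂.not_gt (lt_of_mul_lt_mul_left hprice hγ.le)

lemma revenue_strictAntiOn
    (hcond : ∀ r, 0 < r →
      0 < deriv (deriv U) (xs r) + γ * r * xs r ^ (γ - 2) ∧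
      deriv (deriv U) (xs r) + γ * r * xs r ^ (γ - 2) < γ ^ 2 * r * xs r ^ (γ - 2)) :
    StrictAntiOn (fun r => r * xs r ^ γ) (Ioi 0) := by
  intro r₁ h₁ r₂ h₂ h₁₂
  have hdemand := demand_strictAntiOn hpos hfoc hU hγ hcont (fun r hr => (hcond r hr).2) h₁ h₂ h₁₂
  have huIcc := (ordConnected_Ioi (a := (0 : ℝ))).uIcc_subset h₂ h₁
  have hrevenue := lt_of_hasDerivAt_pos_on_image (g := revenueCurve U) (hcont.mono huIcc)
    (by
      rintro _ ⟨r, hr, rfl⟩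
      exact exists_hasDerivAt_revenueCurve_pos hpos hfoc hU (huIcc hr) (hcond r (huIcc hr)).1)
    hdemand
  rw [revenueCurve_demand hpos hfoc h₁, revenueCurve_demand hpos hfoc h₂] at hrevenue
  exact lt_of_mul_lt_mul_left hrevenue hγ.le

end Demand

lemma affine_lt_affine_of_le_of_exists_lt {m : ℕ} {w p q : Fin m → ℝ} (c : ℝ)
    (hw : ∀ i, 0 < w i) (hpq : ∀ i, p i ≤ q i) (hk : ∃ k, p k < q k) :
    c + ∑ i, w i * p i < c + ∑ i, w i * q i := by
  obtain ⟨k, hk⟩ := hk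
  gcongr ?_ + ?_
  exact Finset.sum_lt_sum (fun i _ => mul_le_mul_of_nonneg_left (hpq i) (hw i).le)
    ⟨k, Finset.mem_univ k, mul_lt_mul_of_pos_left hk (hw k)⟩

theorem stmt5_general (n m : ℕ) (hn : 0 < n) (U : Fin n → ℝ → ℝ) (γ : ℝ)
    (a : Fin n → ℝ) (w : Fin n → Fin m → ℝ)
    (xstar : Fin n → ℝ → ℝ)
    (hU : ∀ j, ContDiff ℝ 2 (U j))
    (hγ0 : 0 < γ)
    (ha : ∀ j, 0 ≤ a j) (hw : ∀ j i, 0 < w j i)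
    (hcont : ∀ j, ContinuousOn (xstar j) (Ioi 0))
    (hpos : ∀ j r, 0 < r → 0 < xstar j r)
    (hfoc : ∀ j r, 0 < r → deriv (U j) (xstar j r) = r * γ * xstar j r ^ (γ - 1))
    (hcond : ∀ j r, 0 < r →
      0 < deriv (deriv (U j)) (xstar j r) + γ * r * xstar j r ^ (γ - 2) ∧
      deriv (deriv (U j)) (xstar j r) + γ * r * xstar j r ^ (γ - 2)
        < γ ^ 2 * r * xstar j r ^ (γ - 2)) :
    ∀ p q : Fin m → ℝ, (∀ i, 0 < p i) → (∀ i, p i ≤ q i) → (∃ k, p k < q k) →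
      (∑ j, (a j + ∑ i, w j i * q i) * xstar j (a j + ∑ i, w j i * q i) ^ γ) <
      ∑ j, (a j + ∑ i, w j i * p i) * xstar j (a j + ∑ i, w j i * p i) ^ γ := by
  intro p q hp hpq hk
  have : Nonempty (Fin n) := Fin.pos_iff_nonempty.mp hn
  refine Finset.sum_lt_sum_of_nonempty Finset.univ_nonempty fun j _ => ?_
  have hcost_pos : 0 < a j + ∑ i, w j i * p i :=
    add_pos_of_nonneg_of_pos (ha j) (Finset.sum_pos (fun i _ => mul_pos (hw j i) (hp i))
      (Finset.univ_nonempty_iff.mpr (hk.elim fun k _ => ⟨k⟩)))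
  have hcost_lt := affine_lt_affine_of_le_of_exists_lt (a j) (hw j) hpq hk
  exact revenue_strictAntiOn (hpos j) (hfoc j) (hU j).differentiable_deriv_two hγ0 (hcont j)
    (hcond j) hcost_pos (hcost_pos.trans hcost_lt) hcost_lt

/-- Under the condition `0 < U'' + γ r x^{γ-2} < γ² r x^{γ-2}`, revenue is
strictly decreasing in each coordinate of the price vector. -/
theorem stmt5 (n m : ℕ) (hn : 0 < n) (U : Fin n → ℝ → ℝ) (γ : ℝ)
    (a : Fin n → ℝ) (w : Fin n → Fin m → ℝ)
    (xstar : Fin n → ℝ → ℝ)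
    (hU : ∀ j, ContDiff ℝ 2 (U j))
    (hγ0 : 0 < γ) (hγ1 : γ ≤ 1)
    (ha : ∀ j, 0 ≤ a j) (hw : ∀ j i, 0 < w j i)
    (hcont : ∀ j, ContinuousOn (xstar j) (Ioi 0))
    (hpos : ∀ j r, 0 < r → 0 < xstar j r)
    (hfoc : ∀ j r, 0 < r → deriv (U j) (xstar j r) = r * γ * xstar j r ^ (γ - 1))
    (hcond : ∀ j r, 0 < r →
      0 < deriv (deriv (U j)) (xstar j r) + γ * r * xstar j r ^ (γ - 2) ∧
      deriv (deriv (U j)) (xstar j r) + γ * r * xstar j r ^ (γ - 2)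
        < γ ^ 2 * r * xstar j r ^ (γ - 2)) :
    ∀ p q : Fin m → ℝ, (∀ i, 0 < p i) → (∀ i, p i ≤ q i) → (∃ k, p k < q k) →
      (∑ j, (a j + ∑ i, w j i * q i) * xstar j (a j + ∑ i, w j i * q i) ^ γ) <
      ∑ j, (a j + ∑ i, w j i * p i) * xstar j (a j + ∑ i, w j i * p i) ^ γ :=
  stmt5_general n m hn U γ a w xstar hU hγ0 ha hw hcont hpos hfoc hcond
end

section
/- Suppose β > 1, and for each user j let Ū_j = ν_j · s_j where ν_j = γ/(1-α_j) - 1 > 0 and s_j = r_j (x*_j)^γ > 0 is the amount paid by user j, so the revenue is ρ = ∑_j s_j and the fairness is F_β = (1-β)^{-1} ∑_j Ū_j^{1-β}. Then ρ ≥ (F_β (1-β))^{1/(1-β)} · ∑_{j=1}^n (1-α_j)/(γ + α_j - 1). -/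
open Real Set

/-- For `β > 1`, the revenue is lower-bounded in terms of the achieved
fairness. -/
theorem stmt10 (n : ℕ) (α : Fin n → ℝ) (γ β : ℝ) (s : Fin n → ℝ)
    (hα0 : ∀ j, 0 < α j) (hα1 : ∀ j, α j < 1)
    (hγ0 : 0 < γ) (hγ1 : γ ≤ 1) (hγα : ∀ j, 1 - α j < γ)
    (hβ : 1 < β) (hs : ∀ j, 0 < s j) :
    let ν : Fin n → ℝ := fun j => γ / (1 - α j) - 1
    let F : ℝ := (1 - β)⁻¹ * ∑ j, (ν j * s j) ^ (1 - β)
    (∑ j, s j) ≥ (F * (1 - β)) ^ (1 / (1 - β)) * ∑ j, (1 - α j) / (γ + α j - 1) := by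
  intro ν F
  have hp : (1 - β) < 0 := by linarith
  have hpne : (1 - β) ≠ 0 := ne_of_lt hp
  have hν : ∀ j, 0 < ν j := by
    intro j
    have h1 : 0 < 1 - α j := by linarith [hα1 j]
    have : 1 < γ / (1 - α j) := (one_lt_div h1).mpr (hγα j)
    simpa [ν] using sub_pos.mpr this
  have ha : ∀ j, 0 < ν j * s j := fun j => mul_pos (hν j) (hs j)
  have hFe : F * (1 - β) = ∑ j, (ν j * s j) ^ (1 - β) := by
    simp only [F]
    rw [mul_comm ((1-β)⁻¹), mul_assoc, inv_mul_cancel₀ hpne, mul_one]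
  set M := (F * (1 - β)) ^ (1 / (1 - β)) with hM
  have hM0 : 0 ≤ M := by
    rw [hM, hFe]
    exact Real.rpow_nonneg (Finset.sum_nonneg fun j _ =>
      (Real.rpow_pos_of_pos (ha j) _).le) _
  have hMle : ∀ j, M ≤ ν j * s j := by
    intro j
    have hsum : (ν j * s j) ^ (1 - β) ≤ ∑ i, (ν i * s i) ^ (1 - β) :=
      Finset.single_le_sum (fun i _ => (Real.rpow_pos_of_pos (ha i) _).le)
        (Finset.mem_univ j)
    have hz : 1 / (1 - β) ≤ 0 := by
      rw [one_div]; exact (inv_nonpos).mpr hp.le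
    have h2 := Real.rpow_le_rpow_of_nonpos (Real.rpow_pos_of_pos (ha j) (1 - β))
      hsum hz
    rw [hM, hFe]
    calc (∑ i, (ν i * s i) ^ (1 - β)) ^ (1 / (1 - β))
        ≤ ((ν j * s j) ^ (1 - β)) ^ (1 / (1 - β)) := h2
      _ = ν j * s j := by
          rw [← Real.rpow_mul (ha j).le, mul_one_div, div_self hpne, Real.rpow_one]
  have hkey : ∀ j, M * ((1 - α j) / (γ + α j - 1)) ≤ s j := by
    intro j
    have h1 : 0 < 1 - α j := by linarith [hα1 j]
    have h2 : 0 < γ + α j - 1 := by linarith [hγα j]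
    have hν' : ν j = (γ + α j - 1) / (1 - α j) := by
      simp only [ν]; field_simp; ring
    have hinv : (1 - α j) / (γ + α j - 1) = (ν j)⁻¹ := by
      rw [hν', inv_div]
    rw [hinv]
    rw [mul_inv_le_iff₀ (hν j), mul_comm]
    exact hMle j
  calc (∑ j, s j) ≥ ∑ j, M * ((1 - α j) / (γ + α j - 1)) :=
        Finset.sum_le_sum fun j _ => hkey j
    _ = M * ∑ j, (1 - α j) / (γ + α j - 1) := by rw [Finset.mul_sum]
end
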